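/- Let H : Matrix (ZMod 2) (ZMod 2) ℂ be the Hadamard matrix, H x y = (1 / Real.sqrt 2) * (-1 : ℂ) ^ ((x * y).val). Then (i) every entry of H is non-zero, so the only relation R : Set (ZMod 2 × ZMod 2) that is a sound abstraction of H is the full relation Set.univ; and (ii) H * H = 1, so the identity relation {(x, x') | x' = x} is a sound (indeed precise) abstraction of H * H. (Hence composition of sound abstractions is not precise: composing the abstractions of the two H gates yields the full relation, strictly coarser than the precise abstraction of H·H.) -/

import Mathlib

/-- The Hadamard gate as a matrix on classical states of one qubit. -/
noncomputable def Hmat : Matrix (ZMod 2) (ZMod 2) ℂ :=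
  fun x y => (1 / (Real.sqrt 2 : ℂ)) * (-1 : ℂ) ^ ((x * y).val)

theorem ZMod.eq_zero_or_eq_one_of_two (x : ZMod 2) : x = 0 ∨ x = 1 := by
  revert x; decide

theorem ZMod.sum_univ_two {M : Type*} [AddCommMonoid M] (f : ZMod 2 → M) :
    ∑ x, f x = f 0 + f 1 :=
  Fin.sum_univ_two f

theorem Complex.inv_sqrt_two_mul_self :
    (Real.sqrt 2 : ℂ)⁻¹ * (Real.sqrt 2 : ℂ)⁻¹ = 2⁻¹ := by
  rw [← mul_inv, ← Complex.ofReal_mul, Real.mul_self_sqrt zero_le_two]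
  norm_num

theorem Matrix.one_apply_ne_zero_iff {n α : Type*} [DecidableEq n] [Zero α] [One α]
    [NeZero (1 : α)] {i j : n} : (1 : Matrix n n α) i j ≠ 0 ↔ i = j := by
  rw [Matrix.one_apply]
  split_ifs with h <;> simp [h]

theorem Set.eq_univ_of_forall_apply_ne_zero {α β M : Type*} [Zero M] {U : α → β → M}
    (hU : ∀ a b, U a b ≠ 0) {R : Set (β × α)} (hR : ∀ b a, U a b ≠ 0 → (b, a) ∈ R) :
    R = Set.univ :=
  Set.eq_univ_of_forall fun ⟨b, a⟩ => hR b a (hU a b)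

theorem Hmat_apply_ne_zero (x y : ZMod 2) : Hmat x y ≠ 0 :=
  mul_ne_zero (by simp) (pow_ne_zero _ (by norm_num))

theorem Hmat_mul_self : Hmat * Hmat = 1 := by
  ext x y
  rw [Matrix.mul_apply, ZMod.sum_univ_two, Matrix.one_apply]
  obtain rfl | rfl := x.eq_zero_or_eq_one_of_two <;>
    obtain rfl | rfl := y.eq_zero_or_eq_one_of_two <;>
    simp [Hmat, ZMod.val_one, Complex.inv_sqrt_two_mul_self] <;>
    norm_num

theorem hadamard_abstraction_imprecise :
    (∀ x y : ZMod 2, Hmat x y ≠ 0) ∧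
      (∀ R : Set (ZMod 2 × ZMod 2),
        (∀ x x' : ZMod 2, Hmat x' x ≠ 0 → (x, x') ∈ R) → R = Set.univ) ∧
      Hmat * Hmat = 1 ∧
      (∀ x x' : ZMod 2, (Hmat * Hmat) x' x ≠ 0 → (x, x') ∈ {p : ZMod 2 × ZMod 2 | p.2 = p.1}) ∧
      (∀ x x' : ZMod 2, (x, x') ∈ {p : ZMod 2 × ZMod 2 | p.2 = p.1} → (Hmat * Hmat) x' x ≠ 0) := by
  refine ⟨Hmat_apply_ne_zero, fun R => Set.eq_univ_of_forall_apply_ne_zero Hmat_apply_ne_zero,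
    Hmat_mul_self, fun x x' h => ?_, fun x x' h => ?_⟩
  · rw [Hmat_mul_self] at h
    exact Matrix.one_apply_ne_zero_iff.mp h
  · rw [Hmat_mul_self]
    exact Matrix.one_apply_ne_zero_iff.mpr h
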